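/- arXiv:2301.08270 — 4 statements merged into one kernel-verified Lean document; each statement's English description precedes it below -/
import Mathlib

section
/- Let n ≥ 3 be an integer, c > (n−1)/(4n) and Λ > 0 real numbers, and let β₂ be as defined. Suppose w > 2π√((c/Λ)·((4c−1)n + 2 − 4c)/((4c−1)n + 1)). Then for any b ∈ ℝ and any real r with (π/w)·r + b ∈ (0, π), the function f(r) = −(π/w)·cot((π/w)·r + b) satisfies β₂·f(r)² − β₂·|f′(r)| + nΛ/(4c(n−1)) = nΛ/(4c(n−1)) − β₂π²/w², and this quantity is strictly positive. -/
/-!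
The potential `f = −a cot(a r + b)` solves the Riccati equation `f′ = a² + f²`, so
`β₂ (f² − |f′|) = −β₂ a²` is constant. The constants simplify to
`β₂ = 1 + 1 / ((n − 1)((4c − 1)n + 1))`, with which the radicand of the width bound becomes
`β₂ c (n − 1) / (n Λ)`; squaring the width bound is then exactly the positivity of
`n Λ / (4c(n − 1)) − β₂ π² / w²`.
-/

open Real

theorem Real.hasDerivAt_cot {x : ℝ} (hx : sin x ≠ 0) :
    HasDerivAt cot (-1 / sin x ^ 2) x := by
  have h := (hasDerivAt_cos x).div (hasDerivAt_sin x) hx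
  rw [show cos / sin = cot from funext fun y => (cot_eq_cos_div_sin y).symm] at h
  refine h.congr_deriv ?_
  rw [div_left_inj' (by positivity)]
  linear_combination -(sin_sq_add_cos_sq x)

theorem Real.cot_sq_sub_one_div_sin_sq {x : ℝ} (hx : sin x ≠ 0) :
    cot x ^ 2 - 1 / sin x ^ 2 = -1 := by
  rw [cot_eq_cos_div_sin]
  field_simp
  linear_combination cos_sq_add_sin_sq x

theorem hasDerivAt_neg_mul_cot_affine {a b r : ℝ} (h : sin (a * r + b) ≠ 0) :
    HasDerivAt (fun r => -a * cot (a * r + b)) (a ^ 2 / sin (a * r + b) ^ 2) r := by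
  have hinner : HasDerivAt (fun r => a * r + b) a r := by
    simpa using ((hasDerivAt_id r).const_mul a).add_const b
  exact (((hasDerivAt_cot h).comp r hinner).const_mul (-a)).congr_deriv (by ring)

theorem cot_potential_sq_sub_abs_deriv {a b r : ℝ} (h : sin (a * r + b) ≠ 0) :
    (-a * cot (a * r + b)) ^ 2 - |deriv (fun r => -a * cot (a * r + b)) r| = -a ^ 2 := by
  rw [(hasDerivAt_neg_mul_cot_affine h).deriv, abs_of_nonneg (by positivity)]
  linear_combination a ^ 2 * cot_sq_sub_one_div_sin_sq h

section CalliasConstants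

variable {n c Λ β β₁ β₂ : ℝ}

theorem callias_beta₂_eq (hn : 1 < n) (hc : (n - 1) / (4 * n) < c)
    (hβ : β = n / (n - 1) - 1 / (4 * c))
    (hβ₁ : β₁ = 1 / (n * (n - 1)) - 1 / (β * (n - 1) ^ 2))
    (hβ₂ : β₂ = 1 - n * β₁ / (n - 1)) :
    β₂ = ((n - 1) * ((4 * c - 1) * n + 1) + 1) / ((n - 1) * ((4 * c - 1) * n + 1)) := by
  have hn₀ : 0 < n := by linarith
  have hn₁ : n - 1 ≠ 0 := by linarith
  have hc₀ : 0 < c := lt_trans (by bound) hc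
  set A := (4 * c - 1) * n + 1 with hA
  have hA₀ : A ≠ 0 := by
    rw [div_lt_iff₀ (by positivity)] at hc
    nlinarith
  have hβ' : β = A / (4 * c * (n - 1)) := by
    rw [hβ, hA]; field_simp; ring
  rw [hβ₂, hβ₁, hβ']
  field_simp
  rw [hA]
  ring

theorem callias_width_radicand_eq (hn : 1 < n) (hc : (n - 1) / (4 * n) < c)
    (hβ : β = n / (n - 1) - 1 / (4 * c))
    (hβ₁ : β₁ = 1 / (n * (n - 1)) - 1 / (β * (n - 1) ^ 2))
    (hβ₂ : β₂ = 1 - n * β₁ / (n - 1)) :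
    (c / Λ) * (((4 * c - 1) * n + 2 - 4 * c) / ((4 * c - 1) * n + 1))
      = β₂ * c * (n - 1) / (n * Λ) := by
  rw [callias_beta₂_eq hn hc hβ hβ₁ hβ₂]
  have hn₁ : n - 1 ≠ 0 := by linarith
  field_simp
  ring

theorem callias_gap_pos (hn : 1 < n) (hc : 0 < c) (hΛ : 0 < Λ) {w : ℝ}
    (hw : 2 * π * √(β₂ * c * (n - 1) / (n * Λ)) < w) :
    0 < n * Λ / (4 * c * (n - 1)) - β₂ * π ^ 2 / w ^ 2 := by
  have hn₁ : 0 < n - 1 := by linarith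
  have hw₀ : 0 < w := lt_of_le_of_lt (by positivity) hw
  have hsq := lt_sq_of_sqrt_lt ((lt_div_iff₀' (by positivity)).mpr hw)
  rw [div_pow, lt_div_iff₀ (by positivity), div_mul_eq_mul_div, div_lt_iff₀ (by positivity)] at hsq
  rw [sub_pos, div_lt_div_iff₀ (by positivity) (by positivity)]
  nlinarith

end CalliasConstants

/-- The differential identity and strict positivity for the cotangent potential in
the spinorial Callias operator proof: if the band width
`w > 2π√((c/Λ)((4c−1)n+2−4c)/((4c−1)n+1))`, then `f(r) = −(π/w) cot((π/w) r + b)`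
satisfies `β₂ f² − β₂ |f′| + nΛ/(4c(n−1)) = nΛ/(4c(n−1)) − β₂ π²/w² > 0`
wherever `(π/w) r + b ∈ (0, π)`. -/
theorem callias_potential_inequality (n : ℕ) (hn : 3 ≤ n) (c Λ : ℝ)
    (hc : ((n : ℝ) - 1) / (4 * n) < c) (hΛ : 0 < Λ)
    (β β₁ β₂ : ℝ) (hβ : β = (n : ℝ) / ((n : ℝ) - 1) - 1 / (4 * c))
    (hβ₁ : β₁ = 1 / ((n : ℝ) * ((n : ℝ) - 1)) - 1 / (β * ((n : ℝ) - 1) ^ 2))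
    (hβ₂ : β₂ = 1 - (n : ℝ) * β₁ / ((n : ℝ) - 1))
    (w : ℝ)
    (hw : 2 * π * Real.sqrt ((c / Λ) * (((4 * c - 1) * n + 2 - 4 * c)
          / ((4 * c - 1) * n + 1))) < w) :
    ∀ (b : ℝ) (f : ℝ → ℝ),
      f = (fun r => -(π / w) * Real.cot ((π / w) * r + b)) →
      ∀ r : ℝ, (π / w) * r + b ∈ Set.Ioo (0 : ℝ) π →
        (β₂ * (f r) ^ 2 - β₂ * |deriv f r| + (n : ℝ) * Λ / (4 * c * ((n : ℝ) - 1))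
            = (n : ℝ) * Λ / (4 * c * ((n : ℝ) - 1)) - β₂ * π ^ 2 / w ^ 2 ∧
          0 < (n : ℝ) * Λ / (4 * c * ((n : ℝ) - 1)) - β₂ * π ^ 2 / w ^ 2) := by
  rintro b f rfl r hr
  have hn₁ : (1 : ℝ) < n := by exact_mod_cast hn.trans_lt' (by norm_num)
  have hsin : sin (π / w * r + b) ≠ 0 := (sin_pos_of_pos_of_lt_pi hr.1 hr.2).ne'
  refine ⟨?_, callias_gap_pos hn₁ (lt_trans (by bound) hc) hΛ ?_⟩
  · linear_combination β₂ * cot_potential_sq_sub_abs_deriv hsin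
  · rwa [← callias_width_radicand_eq hn₁ hc hβ hβ₁ hβ₂]
end

section
/- Fix real numbers c > 1/6 and α > 0, and on (0, π/α) define φ(ρ) = (sin(αρ))^((4c−1)/(6c−1)), u₀(ρ) = (sin(αρ))^(2c/(6c−1)), and R(ρ) = −2(φ′(ρ)² + 2φ(ρ)φ″(ρ))/φ(ρ)². Then for every ρ ∈ (0, π/α), −u₀″(ρ) − 2(φ′(ρ)/φ(ρ))·u₀′(ρ) + c·R(ρ)·u₀(ρ) = Λ′_c·u₀(ρ), where Λ′_c = (16c² − 2c)α²/(6c − 1) (equivalently Λ′_c = 2c(8 − 1/c)α²/(6 − 1/c)). -/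
open Real Filter Topology

/-! With `s = sin (α ρ)` and `t = cos (α ρ) / s`, a power `s ^ p` satisfies
`(s ^ p)' = p α t s ^ p` and `(s ^ p)'' = p α² ((p - 1) t² - 1) s ^ p`. For `φ = s ^ a` and
`u₀ = s ^ b` the left-hand side is therefore `α² u₀` times a quadratic polynomial in `t`,
with `t²`-coefficient `-(b (b - 1) + 2 a b + 2 c (3 a² - 2 a))` and constant term `b + 4 a c`.
The exponents `a = (4c - 1)/(6c - 1)`, `b = 2c/(6c - 1)` make the first vanish and the second
equal `Λ'_c / α²`. -/

lemma sin_mul_pos_of_mem_Ioo {α ρ : ℝ} (hρ : ρ ∈ Set.Ioo 0 (π / α)) : 0 < sin (α * ρ) := by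
  have hα : 0 < α := (div_pos_iff_of_pos_left pi_pos).mp (hρ.1.trans hρ.2)
  refine sin_pos_of_pos_of_lt_pi (mul_pos hα hρ.1) ?_
  rw [← lt_div_iff₀' hα]
  exact hρ.2

section PowerOfSine

variable {α p x : ℝ}

lemma hasDerivAt_sin_mul_rpow (hx : 0 < sin (α * x)) :
    HasDerivAt (fun y => sin (α * y) ^ p) (p * α * cos (α * x) * sin (α * x) ^ (p - 1)) x := by
  exact ((hasDerivAt_const_mul α).sin.rpow_const (Or.inl hx.ne')).congr_deriv (by ring)

lemma deriv_sin_mul_rpow (hx : 0 < sin (α * x)) :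
    deriv (fun y => sin (α * y) ^ p) x
      = p * α * (cos (α * x) / sin (α * x)) * sin (α * x) ^ p := by
  rw [(hasDerivAt_sin_mul_rpow hx).deriv, rpow_sub_one hx.ne']
  ring

lemma deriv_deriv_sin_mul_rpow (hx : 0 < sin (α * x)) :
    deriv (deriv fun y => sin (α * y) ^ p) x
      = p * α ^ 2 * ((p - 1) * (cos (α * x) / sin (α * x)) ^ 2 - 1) * sin (α * x) ^ p := by
  have hsin_cont : Continuous fun y => sin (α * y) := by fun_prop
  have hderiv : deriv (fun y => sin (α * y) ^ p)
      =ᶠ[𝓝 x] fun y => p * α * (cos (α * y) * sin (α * y) ^ (p - 1)) := by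
    filter_upwards [continuousAt_const.eventually_lt hsin_cont.continuousAt hx] with y hy
    rw [(hasDerivAt_sin_mul_rpow hy).deriv]
    ring
  have hprod : HasDerivAt (fun y => p * α * (cos (α * y) * sin (α * y) ^ (p - 1)))
      (p * α * (-sin (α * x) * α * sin (α * x) ^ (p - 1)
        + cos (α * x) * ((p - 1) * α * cos (α * x) * sin (α * x) ^ (p - 1 - 1)))) x :=
    ((hasDerivAt_const_mul α).cos.mul (hasDerivAt_sin_mul_rpow hx)).const_mul (p * α)
  rw [hderiv.deriv_eq, hprod.deriv, sub_sub, one_add_one_eq_two, rpow_sub_one hx.ne',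
    rpow_sub hx, rpow_two]
  field_simp
  ring

end PowerOfSine

lemma power_ansatz_radial_operator (a b c α t A B : ℝ) (hA : A ≠ 0) :
    -(b * α ^ 2 * ((b - 1) * t ^ 2 - 1) * B) - 2 * (a * α * t * A / A) * (b * α * t * B)
      + c * (-2 * ((a * α * t * A) ^ 2 + 2 * A * (a * α ^ 2 * ((a - 1) * t ^ 2 - 1) * A)) / A ^ 2)
        * B
      = α ^ 2 * (b + 4 * a * c - (b * (b - 1) + 2 * a * b + 2 * c * (3 * a ^ 2 - 2 * a)) * t ^ 2)
        * B := by
  field_simp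
  ring

lemma model_exponents_quadratic_coeff {c : ℝ} (hc : 6 * c - 1 ≠ 0) :
    2 * c / (6 * c - 1) * (2 * c / (6 * c - 1) - 1)
      + 2 * ((4 * c - 1) / (6 * c - 1)) * (2 * c / (6 * c - 1))
      + 2 * c * (3 * ((4 * c - 1) / (6 * c - 1)) ^ 2 - 2 * ((4 * c - 1) / (6 * c - 1))) = 0 := by
  rw [div_sub_one hc]
  field_simp
  ring

lemma model_exponents_constant_term (c : ℝ) :
    2 * c / (6 * c - 1) + 4 * ((4 * c - 1) / (6 * c - 1)) * c
      = (16 * c ^ 2 - 2 * c) / (6 * c - 1) := by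
  field_simp
  ring

theorem model_eigenfunction_identity_general (c α : ℝ) (hc : 1 / 6 < c)
    (φ u₀ R : ℝ → ℝ)
    (hφ : φ = fun ρ => Real.sin (α * ρ) ^ ((4 * c - 1) / (6 * c - 1)))
    (hu₀ : u₀ = fun ρ => Real.sin (α * ρ) ^ (2 * c / (6 * c - 1)))
    (hR : R = fun ρ =>
      -2 * ((deriv φ ρ) ^ 2 + 2 * φ ρ * deriv (deriv φ) ρ) / (φ ρ) ^ 2) :
    ∀ ρ ∈ Set.Ioo (0 : ℝ) (π / α),
      -(deriv (deriv u₀) ρ) - 2 * (deriv φ ρ / φ ρ) * deriv u₀ ρ + c * R ρ * u₀ ρ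
        = ((16 * c ^ 2 - 2 * c) * α ^ 2 / (6 * c - 1)) * u₀ ρ := by
  intro ρ hρ
  subst hφ hu₀ hR
  have hs := sin_mul_pos_of_mem_Ioo hρ
  simp only [deriv_sin_mul_rpow hs, deriv_deriv_sin_mul_rpow hs]
  rw [power_ansatz_radial_operator _ _ _ _ _ _ _ (rpow_pos_of_pos hs _).ne',
    model_exponents_quadratic_coeff (by linarith), zero_mul, sub_zero, model_exponents_constant_term]
  ring

/-- The model eigenfunction identity in the equality case of the 3-dimensional
spectral torical band inequality: with `φ(ρ) = (sin(αρ))^((4c−1)/(6c−1))`,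
`u₀(ρ) = (sin(αρ))^(2c/(6c−1))`, and `R = −2(φ′² + 2φφ″)/φ²`, one has
`−u₀″ − 2(φ′/φ)u₀′ + cRu₀ = Λ′_c u₀` on `(0, π/α)`, where
`Λ′_c = (16c² − 2c)α²/(6c − 1)`. -/
theorem model_eigenfunction_identity (c α : ℝ) (hc : 1 / 6 < c) (hα : 0 < α)
    (φ u₀ R : ℝ → ℝ)
    (hφ : φ = fun ρ => Real.sin (α * ρ) ^ ((4 * c - 1) / (6 * c - 1)))
    (hu₀ : u₀ = fun ρ => Real.sin (α * ρ) ^ (2 * c / (6 * c - 1)))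
    (hR : R = fun ρ =>
      -2 * ((deriv φ ρ) ^ 2 + 2 * φ ρ * deriv (deriv φ) ρ) / (φ ρ) ^ 2) :
    ∀ ρ ∈ Set.Ioo (0 : ℝ) (π / α),
      -(deriv (deriv u₀) ρ) - 2 * (deriv φ ρ / φ ρ) * deriv u₀ ρ + c * R ρ * u₀ ρ
        = ((16 * c ^ 2 - 2 * c) * α ^ 2 / (6 * c - 1)) * u₀ ρ :=
  model_eigenfunction_identity_general c α hc φ u₀ R hφ hu₀ hR
end

section
/- Let a < b be real numbers, let w : (a,b) → ℝ be a positive C¹ function, let V : (a,b) → ℝ be continuous, and let Λ′ ∈ ℝ. Suppose u₀ : (a,b) → ℝ is a positive C² function satisfying (w·u₀′)′ = (V − Λ′)·w·u₀ on (a,b). Then for every smooth function ψ : (a,b) → ℝ with compact support, ∫ₐᵇ (ψ′(ρ)² + V(ρ)ψ(ρ)²)·w(ρ) dρ ≥ Λ′·∫ₐᵇ ψ(ρ)²·w(ρ) dρ. -/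
open MeasureTheory

/-- A function continuous on `Ioo a b` vanishing off a compact `K ⊆ Ioo a b`
is continuous with compact support. -/
lemma aux_cont_cpt (a b : ℝ) (K : Set ℝ) (hKc : IsCompact K) (hKs : K ⊆ Set.Ioo a b)
    (f : ℝ → ℝ) (hf : ContinuousOn f (Set.Ioo a b)) (h0 : ∀ x ∉ K, f x = 0) :
    Continuous f ∧ HasCompactSupport f := by
  constructor
  · rw [continuous_iff_continuousAt]
    intro x
    by_cases hx : x ∈ Set.Ioo a b
    · exact hf.continuousAt (isOpen_Ioo.mem_nhds hx)
    · have hxK : x ∉ K := fun h => hx (hKs h)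
      have : f =ᶠ[nhds x] fun _ => 0 := by
        filter_upwards [hKc.isClosed.isOpen_compl.mem_nhds hxK] with y hy
        exact h0 y hy
      exact (continuousAt_const).congr this.symm
  · apply HasCompactSupport.of_support_subset_isCompact hKc
    intro x hx
    by_contra hxK
    exact hx (h0 x hxK)

/-- The one-dimensional ground-state argument: if a positive `C²` function `u₀`
satisfies the Sturm–Liouville equation `(w u₀′)′ = (V − Λ′) w u₀` on `(a,b)` with
positive `C¹` weight `w` and continuous potential `V`, then every smooth compactly
supported test function `ψ` on `(a,b)` has weighted Rayleigh quotient at least `Λ′`. -/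
theorem ground_state_rayleigh (a b : ℝ) (hab : a < b) (w V u₀ : ℝ → ℝ) (Λ' : ℝ)
    (hw_pos : ∀ x ∈ Set.Ioo a b, 0 < w x)
    (hw_smooth : ContDiffOn ℝ 1 w (Set.Ioo a b))
    (hV : ContinuousOn V (Set.Ioo a b))
    (hu₀_pos : ∀ x ∈ Set.Ioo a b, 0 < u₀ x)
    (hu₀_smooth : ContDiffOn ℝ 2 u₀ (Set.Ioo a b))
    (hode : ∀ x ∈ Set.Ioo a b,
      deriv (fun y => w y * deriv u₀ y) x = (V x - Λ') * w x * u₀ x) :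
    ∀ ψ : ℝ → ℝ, ContDiff ℝ (⊤ : ℕ∞) ψ → HasCompactSupport ψ →
      tsupport ψ ⊆ Set.Ioo a b →
      Λ' * ∫ ρ in Set.Ioo a b, (ψ ρ) ^ 2 * w ρ
        ≤ ∫ ρ in Set.Ioo a b, ((deriv ψ ρ) ^ 2 + V ρ * (ψ ρ) ^ 2) * w ρ := by
  intro ψ hψ hψc hψs
  set s := Set.Ioo a b with hs
  have hso : IsOpen s := isOpen_Ioo
  set K := tsupport ψ with hK
  have hKc : IsCompact K := hψc
  -- basic vanishing facts off K
  have hψ0 : ∀ x ∉ K, ψ x = 0 := fun x hx => image_eq_zero_of_notMem_tsupport hx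
  have hψev : ∀ x ∉ K, ψ =ᶠ[nhds x] fun _ => 0 := by
    intro x hx
    filter_upwards [hKc.isClosed.isOpen_compl.mem_nhds hx] with y hy
    exact hψ0 y hy
  have hψ'0 : ∀ x ∉ K, deriv ψ x = 0 := by
    intro x hx
    rw [Filter.EventuallyEq.deriv_eq (hψev x hx)]
    exact deriv_const x 0
  -- regularity facts
  have hψd : ∀ x : ℝ, HasDerivAt ψ (deriv ψ x) x :=
    fun x => (hψ.differentiable (by simp)).differentiableAt.hasDerivAt
  have hψ'cont : Continuous (deriv ψ) := hψ.continuous_deriv (by simp)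
  have hu₀' : ContDiffOn ℝ 1 (deriv u₀) s :=
    hu₀_smooth.deriv_of_isOpen hso (by norm_num)
  have hu₀'cont : ContinuousOn (deriv u₀) s := hu₀'.continuousOn
  have hu₀d : ∀ x ∈ s, HasDerivAt u₀ (deriv u₀ x) x := fun x hx =>
    ((hu₀_smooth.differentiableOn (by norm_num)).differentiableAt
      (hso.mem_nhds hx)).hasDerivAt
  have hu₀ne : ∀ x ∈ s, u₀ x ≠ 0 := fun x hx => (hu₀_pos x hx).ne'
  -- the auxiliary function g and the residual q
  set g : ℝ → ℝ := fun x => (w x * deriv u₀ x) * (ψ x ^ 2 / u₀ x) with hgdef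
  set q : ℝ → ℝ := fun x => w x * (deriv ψ x - ψ x * deriv u₀ x / u₀ x) ^ 2 with hqdef
  set f1 : ℝ → ℝ := fun x => ((deriv ψ x) ^ 2 + V x * (ψ x) ^ 2) * w x with hf1def
  set f2 : ℝ → ℝ := fun x => (ψ x) ^ 2 * w x with hf2def
  set E : ℝ → ℝ := fun x => f1 x - Λ' * f2 x - q x with hEdef
  set G : ℝ → ℝ := fun x => if x ∈ s then E x else 0 with hGdef
  -- E vanishes off K
  have hE0 : ∀ x ∉ K, E x = 0 := by
    intro x hx
    simp only [hEdef, hf1def, hf2def, hqdef, hψ0 x hx, hψ'0 x hx]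
    ring
  have hG0 : ∀ x ∉ K, G x = 0 := by
    intro x hx
    simp only [hGdef]
    split
    · exact hE0 x hx
    · rfl
  -- derivative of g inside s
  have hgderiv : ∀ x ∈ s, HasDerivAt g (E x) x := by
    intro x hx
    have hune := hu₀ne x hx
    -- w * deriv u₀ is differentiable at x
    have hwd : DifferentiableAt ℝ (fun y => w y * deriv u₀ y) x := by
      have h1 : DifferentiableAt ℝ w x :=
        ((hw_smooth.differentiableOn (by norm_num)).differentiableAt (hso.mem_nhds hx))
      have h2 : DifferentiableAt ℝ (deriv u₀) x :=
        ((hu₀'.differentiableOn (by norm_num)).differentiableAt (hso.mem_nhds hx))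
      exact h1.mul h2
    have h1 : HasDerivAt (fun y => w y * deriv u₀ y) ((V x - Λ') * w x * u₀ x) x := by
      have := hwd.hasDerivAt
      rwa [hode x hx] at this
    have h2 : HasDerivAt (fun y => ψ y ^ 2 / u₀ y)
        ((2 * ψ x * deriv ψ x * u₀ x - ψ x ^ 2 * deriv u₀ x) / u₀ x ^ 2) x := by
      have hp : HasDerivAt (fun y => ψ y ^ 2) (2 * ψ x * deriv ψ x) x := by
        have := (hψd x).fun_pow 2
        simpa [mul_comm, mul_assoc, mul_left_comm] using this
      exact hp.div (hu₀d x hx) hune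
    have h3 : HasDerivAt g _ x := h1.fun_mul h2
    convert h3 using 1
    simp only [hEdef, hf1def, hf2def, hqdef]
    field_simp
    ring
  -- derivative of g outside K
  have hgderiv0 : ∀ x ∉ K, HasDerivAt g 0 x := by
    intro x hx
    have hgev : g =ᶠ[nhds x] fun _ => 0 := by
      filter_upwards [hKc.isClosed.isOpen_compl.mem_nhds hx] with y hy
      simp [hgdef, hψ0 y hy]
    exact (hasDerivAt_const x 0).congr_of_eventuallyEq hgev
  have hgderivG : ∀ x : ℝ, HasDerivAt g (G x) x := by
    intro x
    by_cases hx : x ∈ s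
    · simpa [hGdef, hx] using hgderiv x hx
    · have hxK : x ∉ K := fun h => hx (hψs h)
      simpa [hGdef, hx] using hgderiv0 x hxK
  -- continuity of the various integrands on s
  have hu₀cont : ContinuousOn u₀ s := hu₀_smooth.continuousOn
  have hwcont : ContinuousOn w s := hw_smooth.continuousOn
  have hf1cont : ContinuousOn f1 s := by
    apply ContinuousOn.mul _ hwcont
    exact ((hψ'cont.continuousOn.pow 2).add (hV.mul ((hψ.continuous.continuousOn).pow 2)))
  have hf2cont : ContinuousOn f2 s :=
    ((hψ.continuous.continuousOn).pow 2).mul hwcont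
  have hqcont : ContinuousOn q s := by
    apply hwcont.mul
    apply ContinuousOn.pow
    exact (hψ'cont.continuousOn).sub
      ((hψ.continuous.continuousOn.mul hu₀'cont).div hu₀cont hu₀ne)
  have hEcont : ContinuousOn E s := (hf1cont.sub (hf2cont.const_smul Λ')).sub hqcont
  -- integrability of f1, f2, q on s
  have hKs : K ⊆ s := hψs
  have hf10 : ∀ x ∉ K, f1 x = 0 := by
    intro x hx; simp [hf1def, hψ0 x hx, hψ'0 x hx]
  have hf20 : ∀ x ∉ K, f2 x = 0 := by
    intro x hx; simp [hf2def, hψ0 x hx]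
  have hq0 : ∀ x ∉ K, q x = 0 := by
    intro x hx; simp [hqdef, hψ0 x hx, hψ'0 x hx]
  have hf1int : IntegrableOn f1 s := by
    obtain ⟨hc, hcs⟩ := aux_cont_cpt a b K hKc hKs f1 hf1cont hf10
    exact (hc.integrable_of_hasCompactSupport hcs).integrableOn
  have hf2int : IntegrableOn f2 s := by
    obtain ⟨hc, hcs⟩ := aux_cont_cpt a b K hKc hKs f2 hf2cont hf20
    exact (hc.integrable_of_hasCompactSupport hcs).integrableOn
  have hqint : IntegrableOn q s := by
    obtain ⟨hc, hcs⟩ := aux_cont_cpt a b K hKc hKs q hqcont hq0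
    exact (hc.integrable_of_hasCompactSupport hcs).integrableOn
  -- G is continuous with compact support
  have hGcont : Continuous G ∧ HasCompactSupport G := by
    apply aux_cont_cpt a b K hKc hKs
    · exact hEcont.congr (fun y hy => by simp [hGdef, hy])
    · exact hG0
  -- ∫ G over s equals 0
  have hGzero : ∫ x in s, G x = 0 := by
    have h1 : ∫ x in s, G x = ∫ x, G x := by
      apply setIntegral_eq_integral_of_forall_compl_eq_zero
      intro x hx
      simp [hGdef, hx]
    have h2 : Function.support G ⊆ Set.Ioc (a - 1) (b + 1) := by
      intro x hx
      have hxK : x ∈ K := by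
        by_contra h
        exact hx (hG0 x h)
      have := hKs hxK
      exact ⟨by linarith [this.1], by linarith [this.2]⟩
    have h3 : ∫ x in (a - 1)..(b + 1), G x = ∫ x, G x :=
      intervalIntegral.integral_eq_integral_of_support_subset h2
    have h4 : ∫ x in (a - 1)..(b + 1), G x = g (b + 1) - g (a - 1) := by
      apply intervalIntegral.integral_eq_sub_of_hasDerivAt
      · intro x _; exact hgderivG x
      · exact (hGcont.1.intervalIntegrable _ _)
    have hga : g (a - 1) = 0 := by
      have : (a - 1) ∉ K := by
        intro h; have := hKs h; linarith [this.1]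
      simp [hgdef, hψ0 _ this]
    have hgb : g (b + 1) = 0 := by
      have : (b + 1) ∉ K := by
        intro h; have := hKs h; linarith [this.2]
      simp [hgdef, hψ0 _ this]
    rw [h1, ← h3, h4, hga, hgb, sub_zero]
  -- ∫ E over s equals 0
  have hEzero : ∫ x in s, E x = 0 := by
    rw [← hGzero]
    apply setIntegral_congr_fun measurableSet_Ioo
    intro x hx
    simp [hGdef, show x ∈ s from hx]
  -- split the integral
  have hsplit : ∫ x in s, E x
      = (∫ x in s, f1 x) - Λ' * (∫ x in s, f2 x) - ∫ x in s, q x := by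
    have hi12 : IntegrableOn (fun x => f1 x - Λ' * f2 x) s :=
      hf1int.sub (hf2int.const_mul Λ')
    calc ∫ x in s, E x
        = (∫ x in s, (f1 x - Λ' * f2 x)) - ∫ x in s, q x := integral_sub hi12 hqint
      _ = ((∫ x in s, f1 x) - ∫ x in s, Λ' * f2 x) - ∫ x in s, q x := by
          rw [integral_sub hf1int (hf2int.const_mul Λ')]
      _ = ((∫ x in s, f1 x) - Λ' * ∫ x in s, f2 x) - ∫ x in s, q x := by
          rw [integral_const_mul]
  have hqnonneg : 0 ≤ ∫ x in s, q x := by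
    apply setIntegral_nonneg measurableSet_Ioo
    intro x hx
    exact mul_nonneg (hw_pos x hx).le (sq_nonneg _)
  have : Λ' * (∫ x in s, f2 x) = (∫ x in s, f1 x) - ∫ x in s, q x := by
    rw [hsplit] at hEzero; linarith
  rw [hs] at this ⊢
  simp only [hf1def, hf2def] at this
  linarith
end

section
/- Let n ≥ 2 be an integer and let A be a self-adjoint endomorphism of an n-dimensional real inner product space with trace A = 0. Then for every unit vector v, ‖A‖² ≥ (n/(n−1))·‖A v‖², where ‖A‖² denotes the squared Frobenius (Hilbert–Schmidt) norm of A. -/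
/-!
Diagonalise `A` in an orthonormal eigenbasis with eigenvalues `μ i`. The Frobenius norm does not
depend on the orthonormal basis, so `‖A‖² = ∑ μ i ^ 2`, while `‖A v‖² = ∑ μ i ^ 2 c i ^ 2` with
`∑ c i ^ 2 = 1`. Since `∑ μ i = 0`, Cauchy–Schwarz applied to `μ k = -∑_{i ≠ k} μ i` bounds every
single eigenvalue by `n μ k ^ 2 ≤ (n - 1) ∑ μ i ^ 2`, and averaging this bound with the weights
`c i ^ 2` gives the claim.
-/

open Finset
open scoped RealInnerProductSpace

section TraceFree

variable {ι : Type*} [Fintype ι] {μ : ι → ℝ}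

theorem card_mul_sq_le_of_sum_eq_zero (hμ : ∑ i, μ i = 0) (k : ι) :
    Fintype.card ι * μ k ^ 2 ≤ (Fintype.card ι - 1) * ∑ i, μ i ^ 2 := by
  classical
  have hsum : μ k + ∑ i ∈ univ.erase k, μ i = 0 := by rwa [add_sum_erase _ _ (mem_univ k)]
  have hsum_sq : μ k ^ 2 + ∑ i ∈ univ.erase k, μ i ^ 2 = ∑ i, μ i ^ 2 :=
    add_sum_erase _ (fun i ↦ μ i ^ 2) (mem_univ k)
  have hcard : ((univ.erase k).card : ℝ) = Fintype.card ι - 1 := by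
    rw [card_erase_of_mem (mem_univ k), card_univ, Nat.cast_pred (Fintype.card_pos_iff.2 ⟨k⟩)]
  have hcs : μ k ^ 2 ≤ (Fintype.card ι - 1) * ∑ i ∈ univ.erase k, μ i ^ 2 := by
    calc μ k ^ 2 = (∑ i ∈ univ.erase k, μ i) ^ 2 := by rw [eq_neg_of_add_eq_zero_left hsum, neg_sq]
      _ ≤ _ := hcard ▸ sq_sum_le_card_mul_sum_sq
  rw [← hsum_sq]
  linarith

theorem card_mul_sum_sq_mul_sq_le_of_sum_eq_zero (hμ : ∑ i, μ i = 0) (c : ι → ℝ) :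
    Fintype.card ι * ∑ i, μ i ^ 2 * c i ^ 2 ≤
      (Fintype.card ι - 1) * (∑ i, μ i ^ 2) * ∑ i, c i ^ 2 := by
  rw [mul_sum, mul_sum]
  refine sum_le_sum fun i _ ↦ ?_
  rw [← mul_assoc]
  exact mul_le_mul_of_nonneg_right (card_mul_sq_le_of_sum_eq_zero hμ i) (sq_nonneg _)

end TraceFree

namespace LinearMap.IsSymmetric

variable {E : Type*} [NormedAddCommGroup E] [InnerProductSpace ℝ E] {A : E →ₗ[ℝ] E}

theorem sum_sq_norm_apply_eq {ι κ : Type*} [Fintype ι] [Fintype κ] (hA : A.IsSymmetric)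
    (b : OrthonormalBasis ι ℝ E) (b' : OrthonormalBasis κ ℝ E) :
    ∑ i, ‖A (b i)‖ ^ 2 = ∑ j, ‖A (b' j)‖ ^ 2 := by
  simp_rw [← b'.sum_sq_inner_right (A (b _)), ← b.sum_sq_inner_right (A (b' _))]
  rw [sum_comm]
  refine sum_congr rfl fun j _ ↦ sum_congr rfl fun i _ ↦ ?_
  rw [← hA, real_inner_comm]

variable [FiniteDimensional ℝ E] {n : ℕ}

theorem sum_sq_norm_apply_eigenvectorBasis (hA : A.IsSymmetric) (hn : Module.finrank ℝ E = n) :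
    ∑ i, ‖A (hA.eigenvectorBasis hn i)‖ ^ 2 = ∑ i, hA.eigenvalues hn i ^ 2 := by
  simp_rw [hA.apply_eigenvectorBasis, norm_smul, (hA.eigenvectorBasis hn).orthonormal.1,
    mul_one, Real.norm_eq_abs, sq_abs]
  rfl

theorem sq_norm_apply_eq_sum (hA : A.IsSymmetric) (hn : Module.finrank ℝ E = n) (v : E) :
    ‖A v‖ ^ 2 = ∑ i, hA.eigenvalues hn i ^ 2 * ⟪hA.eigenvectorBasis hn i, v⟫ ^ 2 := by
  simp_rw [← (hA.eigenvectorBasis hn).sum_sq_inner_right, ← OrthonormalBasis.repr_apply_apply,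
    hA.eigenvectorBasis_apply_self_apply, mul_pow]
  rfl

end LinearMap.IsSymmetric

/-- Refined Kato-type inequality: a trace-free self-adjoint endomorphism `A` of an
`n`-dimensional real inner product space satisfies
`‖A‖_F² ≥ (n/(n−1)) ‖A v‖²` for every unit vector `v`, where the squared Frobenius
norm is computed via any orthonormal basis. -/
theorem traceless_symmetric_kato {E : Type*} [NormedAddCommGroup E]
    [InnerProductSpace ℝ E] [FiniteDimensional ℝ E]
    (n : ℕ) (hn : 2 ≤ n) (hdim : Module.finrank ℝ E = n)
    (A : E →ₗ[ℝ] E) (hA : A.IsSymmetric) (htr : LinearMap.trace ℝ E A = 0) :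
    ∀ (bas : OrthonormalBasis (Fin n) ℝ E) (v : E), ‖v‖ = 1 →
      ((n : ℝ) / ((n : ℝ) - 1)) * ‖A v‖ ^ 2 ≤ ∑ i, ‖A (bas i)‖ ^ 2 := by
  intro bas v hv
  set b := hA.eigenvectorBasis hdim
  have hμ : ∑ i, hA.eigenvalues hdim i = 0 := by
    simpa [htr] using (hA.trace_eq_sum_eigenvalues hdim).symm
  have hweights : ∑ i, ⟪b i, v⟫ ^ 2 = 1 := by
    rw [b.sum_sq_inner_right, hv, one_pow]
  have key := card_mul_sum_sq_mul_sq_le_of_sum_eq_zero hμ (fun i ↦ ⟪b i, v⟫)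
  rw [Fintype.card_fin, hweights, mul_one, ← hA.sq_norm_apply_eq_sum hdim] at key
  have hn1 : (0 : ℝ) < n - 1 := by
    rw [sub_pos, Nat.one_lt_cast]
    omega
  rw [hA.sum_sq_norm_apply_eq bas b, hA.sum_sq_norm_apply_eigenvectorBasis hdim,
    div_mul_eq_mul_div, div_le_iff₀ hn1]
  linarith
end
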